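/- If G is a connected convex bipartite graph with at least one edge, then pb(G) = 1 and, therefore, pl(G) ≤ 2. -/

import Mathlib

open SimpleGraph

variable {V : Type*}

/-- A path-decomposition of `G`: a finite sequence of bags `X 0, …, X (q-1)` such that
every vertex is in some bag, every edge has both ends in some bag, and
`X i ∩ X k ⊆ X j` whenever `i ≤ j ≤ k`. -/
def IsPathDecomp (G : SimpleGraph V) {q : ℕ} (X : Fin q → Set V) : Prop :=
  (∀ v : V, ∃ i, v ∈ X i) ∧
  (∀ u v : V, G.Adj u v → ∃ i, u ∈ X i ∧ v ∈ X i) ∧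
  (∀ i j k : Fin q, i ≤ j → j ≤ k → X i ∩ X k ⊆ X j)

/-- The length of the path-decomposition `X` is at most `l`:
every two vertices in a common bag are at distance at most `l` in `G`. -/
def DecompLengthLE (G : SimpleGraph V) {q : ℕ} (X : Fin q → Set V) (l : ℕ) : Prop :=
  ∀ i, ∀ u ∈ X i, ∀ v ∈ X i, G.dist u v ≤ l

/-- The breadth of the path-decomposition `X` is at most `r`:
every bag is contained in a disk of radius `r` of `G`. -/
def DecompBreadthLE (G : SimpleGraph V) {q : ℕ} (X : Fin q → Set V) (r : ℕ) : Prop :=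
  ∀ i, ∃ c : V, ∀ u ∈ X i, G.dist c u ≤ r

/-- The path-length `pl(G)`: minimum length over all path-decompositions of `G`. -/
noncomputable def pathLength (G : SimpleGraph V) : ℕ :=
  sInf {l | ∃ (q : ℕ) (X : Fin q → Set V), IsPathDecomp G X ∧ DecompLengthLE G X l}

/-- The path-breadth `pb(G)`: minimum breadth over all path-decompositions of `G`. -/
noncomputable def pathBreadth (G : SimpleGraph V) : ℕ :=
  sInf {r | ∃ (q : ℕ) (X : Fin q → Set V), IsPathDecomp G X ∧ DecompBreadthLE G X r}

/-- The path-width `pw(G)`: minimum over all path-decompositions of (max bag size − 1). -/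
noncomputable def pathWidth (G : SimpleGraph V) : ℕ :=
  sInf {w | ∃ (q : ℕ) (X : Fin q → Set V), IsPathDecomp G X ∧ ∀ i, (X i).ncard ≤ w + 1}

/-- `f` is a non-contractive embedding of `G` into the line with distortion at most `k`. -/
def IsLineEmbedding (G : SimpleGraph V) (k : ℕ) (f : V → ℝ) : Prop :=
  ∀ x y : V, (G.dist x y : ℝ) ≤ |f x - f y| ∧ |f x - f y| ≤ (k : ℝ) * (G.dist x y : ℝ)

/-- The minimum line-distortion `ld(G)`. -/
noncomputable def lineDistortion (G : SimpleGraph V) : ℕ :=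
  sInf {k | ∃ f : V → ℝ, IsLineEmbedding G k f}

/-- The bandwidth `bw(G)`: minimum over all layouts (bijections of the vertices
with `{0, …, n-1}`) of the maximum stretch of an edge. -/
noncomputable def bandwidth (G : SimpleGraph V) [Fintype V] : ℕ :=
  sInf {b | ∃ f : V ≃ Fin (Fintype.card V),
    ∀ u v : V, G.Adj u v → Nat.dist (f u : ℕ) (f v : ℕ) ≤ b}

/-- Every path of `G` from `a` to `b` meets the disk of radius `lam` around `c`. -/
def Intercepts (G : SimpleGraph V) (lam : ℕ) (c a b : V) : Prop :=
  ∀ p : G.Walk a b, p.IsPath → ∃ z ∈ p.support, G.dist c z ≤ lam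

/-- The walk `p` avoids the closed neighborhood of `c`. -/
def WalkAvoids (G : SimpleGraph V) {x y : V} (p : G.Walk x y) (c : V) : Prop :=
  ∀ z ∈ p.support, z ≠ c ∧ ¬ G.Adj c z

/-- `a, b, c` form an asteroidal triple of `G`: pairwise non-adjacent, and every two
of them are joined by a path avoiding the closed neighborhood of the third. -/
def IsAsteroidalTriple (G : SimpleGraph V) (a b c : V) : Prop :=
  a ≠ b ∧ a ≠ c ∧ b ≠ c ∧ ¬ G.Adj a b ∧ ¬ G.Adj a c ∧ ¬ G.Adj b c ∧
  (∃ p : G.Walk a b, p.IsPath ∧ WalkAvoids G p c) ∧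
  (∃ p : G.Walk a c, p.IsPath ∧ WalkAvoids G p b) ∧
  (∃ p : G.Walk b c, p.IsPath ∧ WalkAvoids G p a)

/-- `G` is AT-free: it has no asteroidal triple. -/
def ATFree (G : SimpleGraph V) : Prop :=
  ∀ a b c : V, ¬ IsAsteroidalTriple G a b c

/-- `G` is a convex bipartite graph: its vertices split into two independent sets `A`, `B`
(all edges join `A` to `B`) and there is a linear ordering of `A` such that for every
`v ∈ B` the neighbors of `v` form a consecutive block of `A`. -/
def IsConvexBipartite (G : SimpleGraph V) : Prop :=
  ∃ A B : Set V,
    (∀ v : V, v ∈ A ∨ v ∈ B) ∧ (∀ v : V, ¬(v ∈ A ∧ v ∈ B)) ∧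
    (∀ u v : V, G.Adj u v → ((u ∈ A ∧ v ∈ B) ∨ (u ∈ B ∧ v ∈ A))) ∧
    ∃ g : V → ℝ, Set.InjOn g A ∧
      ∀ v ∈ B, ∀ u₁ ∈ A, ∀ u₂ ∈ A, ∀ u₃ ∈ A,
        g u₁ ≤ g u₂ → g u₂ ≤ g u₃ → G.Adj u₁ v → G.Adj u₃ v → G.Adj u₂ v

/-! Let `A` be the side of `G` carrying the convex ordering, enumerated as `a₀ < a₁ < …`, and take
as bags the closed neighbourhoods `N[aᵢ]` in this order. Every vertex outside `A` has a neighbour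
in `A` and lies exactly in the bags of its neighbours, which are consecutive by convexity, so this
is a path-decomposition whose bags are disks of radius `1`; hence `pl(G) ≤ 2`. Radius `0` is
impossible since some bag contains both ends of an edge. -/

theorem Set.Finite.exists_strictMono_enum {α : Type*} [LinearOrder α] {A : Set V}
    (hA : A.Finite) {g : V → α} (hg : Set.InjOn g A) :
    ∃ (q : ℕ) (a : Fin q → V), StrictMono (g ∘ a) ∧ Set.range a = A := by
  set s := (hA.image g).toFinset
  have hs : ∀ i, ∃ x ∈ A, g x = s.orderEmbOfFin rfl i := fun i => by
    have := s.orderEmbOfFin_mem rfl i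
    simpa only [s, Set.Finite.mem_toFinset, Set.mem_image] using this
  choose a haA hga using hs
  refine ⟨s.card, a, fun i j hij => by simpa [hga] using hij, ?_⟩
  refine Set.Subset.antisymm (Set.range_subset_iff.2 haA) fun x hx => ?_
  have hgx : g x ∈ Set.range (s.orderEmbOfFin rfl) := by
    rw [Finset.range_orderEmbOfFin, Set.Finite.coe_toFinset]
    exact Set.mem_image_of_mem g hx
  obtain ⟨i, hi⟩ := hgx
  exact ⟨i, hg (haA i) hx ((hga i).trans hi)⟩

section

variable {G : SimpleGraph V}

theorem IsConvexBipartite.exists_convex_side (h : IsConvexBipartite G) :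
    ∃ (A : Set V) (g : V → ℝ), Set.InjOn g A ∧ (∀ u v, G.Adj u v → (u ∈ A ↔ v ∉ A)) ∧
      ∀ v ∉ A, ∀ u₁ ∈ A, ∀ u₂ ∈ A, ∀ u₃ ∈ A,
        g u₁ ≤ g u₂ → g u₂ ≤ g u₃ → G.Adj u₁ v → G.Adj u₃ v → G.Adj u₂ v := by
  obtain ⟨A, B, hcover, hdisj, hAB, g, hinj, hconv⟩ := h
  have hB : ∀ v ∉ A, v ∈ B := fun v hv => (hcover v).resolve_left hv
  refine ⟨A, g, hinj, fun u v huv => ?_, fun v hv => hconv v (hB v hv)⟩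
  rcases hAB u v huv with ⟨hu, hv⟩ | ⟨hu, hv⟩
  · exact iff_of_true hu fun hv' => hdisj v ⟨hv', hv⟩
  · exact iff_of_false (fun hu' => hdisj u ⟨hu', hu⟩) (not_not.2 hv)

def closedNbhdBags (G : SimpleGraph V) {q : ℕ} (a : Fin q → V) (i : Fin q) : Set V :=
  insert (a i) (G.neighborSet (a i))

theorem decompBreadthLE_closedNbhdBags {q : ℕ} (a : Fin q → V) :
    DecompBreadthLE G (closedNbhdBags G a) 1 := by
  intro i
  refine ⟨a i, fun u hu => ?_⟩
  rcases hu with rfl | hu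
  · simp
  · exact (dist_eq_one_iff_adj.2 hu).le

theorem isPathDecomp_closedNbhdBags {q : ℕ} {a : Fin q → V}
    (hdom : ∀ v, ∃ i, v ∈ closedNbhdBags G a i)
    (hcover : ∀ u v, G.Adj u v → ∃ i, u = a i ∨ v = a i)
    (hinter : ∀ i j k, i ≤ j → j ≤ k →
      closedNbhdBags G a i ∩ closedNbhdBags G a k ⊆ closedNbhdBags G a j) :
    IsPathDecomp G (closedNbhdBags G a) := by
  refine ⟨hdom, fun u v huv => ?_, hinter⟩
  obtain ⟨i, rfl | rfl⟩ := hcover u v huv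
  · exact ⟨i, Set.mem_insert _ _, Or.inr huv⟩
  · exact ⟨i, Or.inr huv.symm, Set.mem_insert _ _⟩

theorem closedNbhdBags_inter_subset_of_convex {α : Type*} [Preorder α] {A : Set V} {g : V → α}
    (hside : ∀ u v, G.Adj u v → (u ∈ A ↔ v ∉ A))
    (hconv : ∀ v ∉ A, ∀ u₁ ∈ A, ∀ u₂ ∈ A, ∀ u₃ ∈ A,
      g u₁ ≤ g u₂ → g u₂ ≤ g u₃ → G.Adj u₁ v → G.Adj u₃ v → G.Adj u₂ v)
    {q : ℕ} {a : Fin q → V} (hmono : StrictMono (g ∘ a)) (haA : ∀ i, a i ∈ A)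
    {i j k : Fin q} (hij : i ≤ j) (hjk : j ≤ k) :
    closedNbhdBags G a i ∩ closedNbhdBags G a k ⊆ closedNbhdBags G a j := by
  rintro v ⟨rfl | hiv, hkv⟩
  · rcases hkv with hki | hkv
    · obtain rfl : i = k := hmono.injective.of_comp hki
      rw [le_antisymm hij hjk]
      exact Set.mem_insert _ _
    · exact absurd (haA i) ((hside _ _ hkv).1 (haA k))
  · have hvA : v ∉ A := (hside _ _ hiv).1 (haA i)
    rcases hkv with rfl | hkv
    · exact absurd (haA k) hvA
    · exact Or.inr (hconv v hvA _ (haA i) _ (haA j) _ (haA k)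
        (hmono.monotone hij) (hmono.monotone hjk) hiv hkv)

theorem isPathDecomp_closedNbhdBags_of_convex {α : Type*} [Preorder α] {A : Set V}
    {g : V → α}
    (hside : ∀ u v, G.Adj u v → (u ∈ A ↔ v ∉ A))
    (hconv : ∀ v ∉ A, ∀ u₁ ∈ A, ∀ u₂ ∈ A, ∀ u₃ ∈ A,
      g u₁ ≤ g u₂ → g u₂ ≤ g u₃ → G.Adj u₁ v → G.Adj u₃ v → G.Adj u₂ v)
    (hnoiso : ∀ v, ∃ w, G.Adj v w) {q : ℕ} {a : Fin q → V} (hmono : StrictMono (g ∘ a))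
    (hrange : Set.range a = A) : IsPathDecomp G (closedNbhdBags G a) := by
  have haA : ∀ i, a i ∈ A := fun i => hrange ▸ Set.mem_range_self i
  have hmemA : ∀ v ∈ A, ∃ i, v = a i := fun v hv => by
    obtain ⟨i, rfl⟩ := hrange.symm ▸ hv
    exact ⟨i, rfl⟩
  refine isPathDecomp_closedNbhdBags (fun v => ?_) (fun u v huv => ?_)
    fun i j k => closedNbhdBags_inter_subset_of_convex hside hconv hmono haA
  · by_cases hv : v ∈ A
    · obtain ⟨i, rfl⟩ := hmemA v hv
      exact ⟨i, Set.mem_insert _ _⟩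
    · obtain ⟨w, hvw⟩ := hnoiso v
      obtain ⟨i, rfl⟩ := hmemA w (not_not.1 (mt (hside v w hvw).2 hv))
      exact ⟨i, Or.inr hvw.symm⟩
  · by_cases hu : u ∈ A
    · obtain ⟨i, rfl⟩ := hmemA u hu
      exact ⟨i, Or.inl rfl⟩
    · obtain ⟨i, rfl⟩ := hmemA v (not_not.1 (mt (hside u v huv).2 hu))
      exact ⟨i, Or.inr rfl⟩

theorem DecompBreadthLE.decompLengthLE (hG : G.Connected) {q : ℕ} {X : Fin q → Set V} {r : ℕ}
    (hX : DecompBreadthLE G X r) : DecompLengthLE G X (2 * r) := by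
  intro i u hu v hv
  obtain ⟨c, hc⟩ := hX i
  calc G.dist u v ≤ G.dist u c + G.dist c v := hG.dist_triangle
    _ = G.dist c u + G.dist c v := by rw [dist_comm]
    _ ≤ 2 * r := by linarith [hc u hu, hc v hv]

theorem pathBreadth_le {q : ℕ} {X : Fin q → Set V} {r : ℕ} (hX : IsPathDecomp G X)
    (hr : DecompBreadthLE G X r) : pathBreadth G ≤ r :=
  Nat.sInf_le ⟨q, X, hX, hr⟩

theorem pathLength_le {q : ℕ} {X : Fin q → Set V} {l : ℕ} (hX : IsPathDecomp G X)
    (hl : DecompLengthLE G X l) : pathLength G ≤ l :=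
  Nat.sInf_le ⟨q, X, hX, hl⟩

theorem IsPathDecomp.not_decompBreadthLE_zero (hG : G.Connected) {u v : V} (huv : G.Adj u v)
    {q : ℕ} {X : Fin q → Set V} (hX : IsPathDecomp G X) : ¬ DecompBreadthLE G X 0 := by
  intro hr
  obtain ⟨i, hu, hv⟩ := hX.2.1 u v huv
  obtain ⟨c, hc⟩ := hr i
  have hcu : c = u := hG.dist_eq_zero_iff.1 (Nat.le_zero.1 (hc u hu))
  have hcv : c = v := hG.dist_eq_zero_iff.1 (Nat.le_zero.1 (hc v hv))
  exact huv.ne (hcu.symm.trans hcv)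

theorem pathBreadth_eq_one (hG : G.Connected) {u v : V} (huv : G.Adj u v) {q : ℕ}
    {X : Fin q → Set V} (hX : IsPathDecomp G X) (hr : DecompBreadthLE G X 1) :
    pathBreadth G = 1 := by
  refine le_antisymm (pathBreadth_le hX hr) (Nat.one_le_iff_ne_zero.2 fun h0 => ?_)
  obtain ⟨q', Y, hY, hY0⟩ := Nat.sInf_mem (s := {r | ∃ (q : ℕ) (X : Fin q → Set V),
    IsPathDecomp G X ∧ DecompBreadthLE G X r}) ⟨1, q, X, hX, hr⟩
  exact hY.not_decompBreadthLE_zero hG huv (h0 ▸ hY0)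

end

theorem stmt18 [Fintype V] (G : SimpleGraph V) (hG : G.Connected)
    (hconv : IsConvexBipartite G) (hedge : ∃ u v : V, G.Adj u v) :
    pathBreadth G = 1 ∧ pathLength G ≤ 2 := by
  obtain ⟨u, v, huv⟩ := hedge
  have : Nontrivial V := huv.nontrivial
  obtain ⟨A, g, hinj, hside, hconvA⟩ := hconv.exists_convex_side
  obtain ⟨q, a, hmono, hrange⟩ := A.toFinite.exists_strictMono_enum hinj
  have hX : IsPathDecomp G (closedNbhdBags G a) :=
    isPathDecomp_closedNbhdBags_of_convex hside hconvA hG.preconnected.exists_adj_of_nontrivial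
      hmono hrange
  have hbreadth := decompBreadthLE_closedNbhdBags (G := G) a
  exact ⟨pathBreadth_eq_one hG huv hX hbreadth, pathLength_le hX (hbreadth.decompLengthLE hG)⟩
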